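/- Let f, g be measurable real-valued functions on the circle S with ‖f‖_p < ∞ and ‖g‖_q < ∞ where 1/p + 1/q = 1, p, q ∈ [1, ∞]. Then ∫_S f(x) g(x) dx ≤ ∫_S f*(x) g*(x) dx, where f*, g* are the symmetric non-increasing rearrangements of f and g. -/

import Mathlib

open MeasureTheory Set Filter
open scoped ENNReal NNReal

noncomputable section

/-- The circle of circumference `1`, parametrised by the interval `(-1/2, 1/2]`. -/
def circ : Set ℝ := Set.Ioc (-(1/2) : ℝ) (1/2)

/-- Lebesgue measure on the circle. -/
def μc : Measure ℝ := volume.restrict circ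

/-- `f : ℝ → ℝ` is a symmetric non-increasing function on the circle. -/
structure SymNonInc (f : ℝ → ℝ) : Prop where
  symm : ∀ x ∈ Set.Ioo (-(1/2) : ℝ) (1/2), f (-x) = f x
  anti : AntitoneOn f (Set.Ico (0 : ℝ) (1/2))
  leftCont0 : ContinuousWithinAt f (Set.Iic (0 : ℝ)) 0
  leftCont : ∀ x ∈ Set.Ioo (0 : ℝ) (1/2), ContinuousWithinAt f (Set.Iic x) x
  rightContHalf : ContinuousWithinAt f (Set.Iic (1/2 : ℝ)) (1/2)

/-- `g` is the symmetric non-increasing rearrangement of `f`. -/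
def IsRearrangement (f g : ℝ → ℝ) : Prop :=
  SymNonInc g ∧ ∀ a : ℝ, μc {x | g x ≤ a} = μc {x | f x ≤ a}

/-!
Split `f g = (f g)⁺ - (f g)⁻`. Pointwise `(f g)⁺ = f⁺ g⁺ + f⁻ g⁻` and `(f g)⁻ = f⁺ g⁻ + f⁻ g⁺`, and
by the layer-cake formula `∫ u⁺ v⁺ = ∫∫_{s, t > 0} μ ({s < u} ∩ {t < v})`. Rearranging preserves
the measure of every level set, while the level sets of symmetric non-increasing functions are
centred arcs, hence nested. So for `f*, g*` each intersection of level sets attains the maximal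
measure `min (μ A) (μ B)`, and each difference `A \ B` the minimal one `μ A - min (μ A) (μ B)`:
rearranging can only increase `∫ (f g)⁺` and decrease `∫ (f g)⁻`.
-/

section Nested

variable {α : Type*} [MeasurableSpace α] {μ : Measure α} {s t s' t' : Set α}

lemma measure_inter_eq_min_of_ae_le_or (h : s ≤ᵐ[μ] t ∨ t ≤ᵐ[μ] s) :
    μ (s ∩ t) = min (μ s) (μ t) := by
  rcases h with h | h
  · rw [min_eq_left (measure_mono_ae h)]
    exact measure_congr <|
      eventuallyEq_set.2 (h.mono fun x hx => ⟨And.left, fun hs => ⟨hs, hx hs⟩⟩)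
  · rw [min_eq_right (measure_mono_ae h)]
    exact measure_congr <|
      eventuallyEq_set.2 (h.mono fun x hx => ⟨And.right, fun ht => ⟨hx ht, ht⟩⟩)

lemma measure_inter_le_of_ae_le_or (hs : μ s = μ s') (ht : μ t = μ t')
    (h' : s' ≤ᵐ[μ] t' ∨ t' ≤ᵐ[μ] s') : μ (s ∩ t) ≤ μ (s' ∩ t') := by
  rw [measure_inter_eq_min_of_ae_le_or h', ← hs, ← ht]
  exact le_min (measure_mono inter_subset_left) (measure_mono inter_subset_right)

lemma measure_sdiff_le_of_ae_le_or [IsFiniteMeasure μ] (ht₀ : NullMeasurableSet t μ)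
    (ht₀' : NullMeasurableSet t' μ) (hs : μ s = μ s') (ht : μ t = μ t')
    (h' : s' ≤ᵐ[μ] t' ∨ t' ≤ᵐ[μ] s') : μ (s' \ t') ≤ μ (s \ t) := by
  have hsdiff : ∀ {u v : Set α}, NullMeasurableSet v μ → μ (u \ v) = μ u - μ (u ∩ v) :=
    fun hv => ENNReal.eq_sub_of_add_eq (measure_ne_top _ _)
      ((add_comm _ _).trans (measure_inter_add_sdiff₀ _ hv))
  rw [hsdiff ht₀, hsdiff ht₀', hs]
  exact tsub_le_tsub_left (measure_inter_le_of_ae_le_or hs ht h') _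

end Nested

section Layercake

variable {α : Type*} [MeasurableSpace α] {μ ν : Measure α} {u v u' v' : α → ℝ}

lemma ENNReal.ofReal_mul_eq_add (a b : ℝ) :
    ENNReal.ofReal (a * b) =
      ENNReal.ofReal a * ENNReal.ofReal b + ENNReal.ofReal (-a) * ENNReal.ofReal (-b) := by
  rcases le_total 0 a with ha | ha <;> rcases le_total 0 b with hb | hb
  · simp [ENNReal.ofReal_mul, ENNReal.ofReal_of_nonpos, *]
  · simp [ENNReal.ofReal_of_nonpos, mul_nonpos_of_nonneg_of_nonpos, *]
  · simp [ENNReal.ofReal_of_nonpos, mul_nonpos_of_nonpos_of_nonneg, *]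
  · simp [← ENNReal.ofReal_mul, ENNReal.ofReal_of_nonpos, *]

lemma lintegral_ofReal_eq_lintegral_meas_lt (hu : AEMeasurable u μ) :
    ∫⁻ x, ENNReal.ofReal (u x) ∂μ = ∫⁻ s in Ioi 0, μ (u ⁻¹' Ioi s) := by
  have hmax : ∀ x, ENNReal.ofReal (max (u x) 0) = ENNReal.ofReal (u x) := by simp
  rw [← lintegral_congr hmax, lintegral_eq_lintegral_meas_lt μ (f := fun x => max (u x) 0)
    (ae_of_all _ fun x => le_max_right _ _) (hu.max aemeasurable_const)]
  refine setLIntegral_congr_fun measurableSet_Ioi fun s (hs : 0 < s) => congrArg μ ?_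
  ext x
  simp [hs.not_gt]

lemma lintegral_ofReal_mul_eq_add (hu : AEMeasurable u μ) (hv : AEMeasurable v μ) :
    ∫⁻ x, ENNReal.ofReal (u x * v x) ∂μ =
      ∫⁻ x, ENNReal.ofReal (u x) * ENNReal.ofReal (v x) ∂μ +
        ∫⁻ x, ENNReal.ofReal (-u x) * ENNReal.ofReal (-v x) ∂μ := by
  simp_rw [ENNReal.ofReal_mul_eq_add]
  exact lintegral_add_left' (hu.ennreal_ofReal.mul hv.ennreal_ofReal) _

variable [SFinite μ]

lemma lintegral_ofReal_mul_ofReal_eq (hu : AEMeasurable u μ) (hv : AEMeasurable v μ) :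
    ∫⁻ x, ENNReal.ofReal (u x) * ENNReal.ofReal (v x) ∂μ =
      ∫⁻ s in Ioi 0, ∫⁻ t in Ioi 0, μ (u ⁻¹' Ioi s ∩ v ⁻¹' Ioi t) := by
  calc ∫⁻ x, ENNReal.ofReal (u x) * ENNReal.ofReal (v x) ∂μ
      = ∫⁻ x, ENNReal.ofReal (u x) ∂(μ.withDensity fun x => ENNReal.ofReal (v x)) := by
        rw [lintegral_withDensity_eq_lintegral_mul₀ hv.ennreal_ofReal hu.ennreal_ofReal]
        simp only [Pi.mul_apply, mul_comm]
    _ = ∫⁻ s in Ioi 0, ∫⁻ x in u ⁻¹' Ioi s, ENNReal.ofReal (v x) ∂μ := by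
        rw [lintegral_ofReal_eq_lintegral_meas_lt
          (hu.mono_ac (withDensity_absolutelyContinuous _ _))]
        simp_rw [withDensity_apply']
    _ = ∫⁻ s in Ioi 0, ∫⁻ t in Ioi 0, μ (u ⁻¹' Ioi s ∩ v ⁻¹' Ioi t) := by
        refine lintegral_congr fun s => ?_
        rw [lintegral_ofReal_eq_lintegral_meas_lt hv.restrict]
        simp_rw [Measure.restrict_apply₀' (hu.nullMeasurable measurableSet_Ioi), inter_comm]

lemma lintegral_ofReal_mul_ofReal_mono [SFinite ν] (hu : AEMeasurable u μ)
    (hv : AEMeasurable v μ) (hu' : AEMeasurable u' ν) (hv' : AEMeasurable v' ν)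
    (h : ∀ s t, μ (u ⁻¹' Ioi s ∩ v ⁻¹' Ioi t) ≤ ν (u' ⁻¹' Ioi s ∩ v' ⁻¹' Ioi t)) :
    ∫⁻ x, ENNReal.ofReal (u x) * ENNReal.ofReal (v x) ∂μ ≤
      ∫⁻ x, ENNReal.ofReal (u' x) * ENNReal.ofReal (v' x) ∂ν := by
  rw [lintegral_ofReal_mul_ofReal_eq hu hv, lintegral_ofReal_mul_ofReal_eq hu' hv']
  exact lintegral_mono fun s => lintegral_mono fun t => h s t

end Layercake

instance : IsFiniteMeasure μc :=
  isFiniteMeasure_restrict.2 (measure_Ioc_lt_top (α := ℝ)).ne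

lemma SymNonInc.antitoneOn_Icc {h : ℝ → ℝ} (H : SymNonInc h) : AntitoneOn h (Icc 0 (1/2)) := by
  have hhalf : ∀ x ∈ Ico (0 : ℝ) (1/2), h (1/2) ≤ h x := by
    intro x hx
    refine le_of_tendsto (H.rightContHalf.mono Iio_subset_Iic_self) ?_
    filter_upwards [Ioo_mem_nhdsLT hx.2] with z hz
    exact H.anti hx ⟨hx.1.trans hz.1.le, hz.2⟩ hz.1.le
  intro x hx y hy hxy
  rcases hy.2.eq_or_lt with rfl | hy₂
  · rcases hxy.eq_or_lt with rfl | hxy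
    · rfl
    · exact hhalf x ⟨hx.1, hxy⟩
  · exact H.anti ⟨hx.1, hxy.trans_lt hy₂⟩ ⟨hy.1, hy₂⟩ hxy

lemma SymNonInc.exists_antitone_abs {h : ℝ → ℝ} (H : SymNonInc h) :
    ∃ k : ℝ → ℝ, Antitone k ∧ ∀ x ∈ circ, h x = k |x| := by
  refine ⟨fun r => h (projIcc 0 (1/2) (by norm_num) r), fun a b hab =>
    H.antitoneOn_Icc (projIcc _ _ _ a).2 (projIcc _ _ _ b).2 (monotone_projIcc _ hab), ?_⟩
  rintro x ⟨hx₁, hx₂⟩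
  have habs : |x| ∈ Icc (0 : ℝ) (1/2) := ⟨abs_nonneg x, abs_le.2 ⟨by linarith, hx₂⟩⟩
  simp only [projIcc_of_mem _ habs]
  rcases le_or_gt 0 x with h0 | h0
  · rw [abs_of_nonneg h0]
  · rw [abs_of_neg h0, H.symm x ⟨hx₁, by linarith⟩]

lemma preimage_ae_le_of_eq_comp_abs {h h' k k' : ℝ → ℝ} {A B : Set ℝ}
    (hh : ∀ x ∈ circ, h x = k |x|) (hh' : ∀ x ∈ circ, h' x = k' |x|)
    (hsub : k ⁻¹' A ⊆ k' ⁻¹' B) : h ⁻¹' A ≤ᵐ[μc] h' ⁻¹' B :=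
  ae_restrict_of_forall_mem measurableSet_Ioc fun x hx (hxA : h x ∈ A) =>
    show h' x ∈ B by rw [hh' x hx]; exact hsub (show k |x| ∈ A by rwa [← hh x hx])

lemma SymNonInc.preimage_ae_le_or_of_isUpperSet {h₁ h₂ : ℝ → ℝ} (H₁ : SymNonInc h₁)
    (H₂ : SymNonInc h₂) {S T : Set ℝ} (hS : IsUpperSet S) (hT : IsUpperSet T) :
    h₁ ⁻¹' S ≤ᵐ[μc] h₂ ⁻¹' T ∨ h₂ ⁻¹' T ≤ᵐ[μc] h₁ ⁻¹' S := by
  obtain ⟨k₁, hk₁, hh₁⟩ := H₁.exists_antitone_abs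
  obtain ⟨k₂, hk₂, hh₂⟩ := H₂.exists_antitone_abs
  have hS' : IsLowerSet (k₁ ⁻¹' S) := fun a b hba ha => hS (hk₁ hba) ha
  have hT' : IsLowerSet (k₂ ⁻¹' T) := fun a b hba ha => hT (hk₂ hba) ha
  exact (hS'.total hT').imp (preimage_ae_le_of_eq_comp_abs hh₁ hh₂)
    (preimage_ae_le_of_eq_comp_abs hh₂ hh₁)

lemma SymNonInc.preimage_ae_le_or_of_isLowerSet {h₁ h₂ : ℝ → ℝ} (H₁ : SymNonInc h₁)
    (H₂ : SymNonInc h₂) {S T : Set ℝ} (hS : IsLowerSet S) (hT : IsLowerSet T) :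
    h₁ ⁻¹' S ≤ᵐ[μc] h₂ ⁻¹' T ∨ h₂ ⁻¹' T ≤ᵐ[μc] h₁ ⁻¹' S := by
  simpa only [preimage_compl, compl_compl] using
    (H₁.preimage_ae_le_or_of_isUpperSet H₂ hS.compl hT.compl).symm.imp
      EventuallyLE.compl EventuallyLE.compl

lemma SymNonInc.aemeasurable {h : ℝ → ℝ} (H : SymNonInc h) : AEMeasurable h μc := by
  obtain ⟨k, hk, hh⟩ := H.exists_antitone_abs
  exact (hk.measurable.comp measurable_abs).aemeasurable.congr
    (ae_restrict_of_forall_mem measurableSet_Ioc fun x hx => (hh x hx).symm)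

lemma IsRearrangement.identDistrib {f fs : ℝ → ℝ} (hf : AEMeasurable f μc)
    (hfs : IsRearrangement f fs) : ProbabilityTheory.IdentDistrib fs f μc μc where
  aemeasurable_fst := hfs.1.aemeasurable
  aemeasurable_snd := hf
  map_eq := Measure.ext_of_Iic _ _ fun a => by
    rw [Measure.map_apply_of_aemeasurable hfs.1.aemeasurable measurableSet_Iic,
      Measure.map_apply_of_aemeasurable hf measurableSet_Iic]
    exact hfs.2 a

lemma preimage_fun_neg_Ioi {α : Type*} (u : α → ℝ) (s : ℝ) :
    (fun x => -u x) ⁻¹' Ioi s = (u ⁻¹' Ici (-s))ᶜ := by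
  ext x
  simp [lt_neg]

section Rearrangement

variable {f g fs gs : ℝ → ℝ}

lemma measure_inter_neg_le_of_isRearrangement (hf : AEMeasurable f μc)
    (hg : AEMeasurable g μc) (hfs : IsRearrangement f fs) (hgs : IsRearrangement g gs) (s t : ℝ) :
    μc (fs ⁻¹' Ioi s ∩ (fun x => -gs x) ⁻¹' Ioi t) ≤
      μc (f ⁻¹' Ioi s ∩ (fun x => -g x) ⁻¹' Ioi t) := by
  simp only [preimage_fun_neg_Ioi, ← sdiff_eq]
  exact measure_sdiff_le_of_ae_le_or (hg.nullMeasurable measurableSet_Ici)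
    (hgs.1.aemeasurable.nullMeasurable measurableSet_Ici)
    ((hfs.identDistrib hf).measure_mem_eq measurableSet_Ioi).symm
    ((hgs.identDistrib hg).measure_mem_eq measurableSet_Ici).symm
    (hfs.1.preimage_ae_le_or_of_isUpperSet hgs.1 (isUpperSet_Ioi _) (isUpperSet_Ici _))

lemma lintegral_ofReal_mul_le_of_isRearrangement (hf : AEMeasurable f μc)
    (hg : AEMeasurable g μc) (hfs : IsRearrangement f fs) (hgs : IsRearrangement g gs) :
    ∫⁻ x, ENNReal.ofReal (f x * g x) ∂μc ≤ ∫⁻ x, ENNReal.ofReal (fs x * gs x) ∂μc := by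
  have hF := hfs.identDistrib hf
  have hG := hgs.identDistrib hg
  rw [lintegral_ofReal_mul_eq_add hf hg,
    lintegral_ofReal_mul_eq_add hF.aemeasurable_fst hG.aemeasurable_fst]
  gcongr ?_ + ?_
  · refine lintegral_ofReal_mul_ofReal_mono hf hg hF.aemeasurable_fst hG.aemeasurable_fst
      fun s t => ?_
    exact measure_inter_le_of_ae_le_or (hF.measure_mem_eq measurableSet_Ioi).symm
      (hG.measure_mem_eq measurableSet_Ioi).symm
      (hfs.1.preimage_ae_le_or_of_isUpperSet hgs.1 (isUpperSet_Ioi _) (isUpperSet_Ioi _))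
  · refine lintegral_ofReal_mul_ofReal_mono hf.neg hg.neg hF.aemeasurable_fst.neg
      hG.aemeasurable_fst.neg fun s t => ?_
    simp only [preimage_fun_neg_Ioi, ← preimage_compl, compl_Ici]
    exact measure_inter_le_of_ae_le_or (hF.measure_mem_eq measurableSet_Iio).symm
      (hG.measure_mem_eq measurableSet_Iio).symm
      (hfs.1.preimage_ae_le_or_of_isLowerSet hgs.1 (isLowerSet_Iio _) (isLowerSet_Iio _))

lemma lintegral_ofReal_neg_mul_le_of_isRearrangement (hf : AEMeasurable f μc)
    (hg : AEMeasurable g μc) (hfs : IsRearrangement f fs) (hgs : IsRearrangement g gs) :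
    ∫⁻ x, ENNReal.ofReal (-(fs x * gs x)) ∂μc ≤ ∫⁻ x, ENNReal.ofReal (-(f x * g x)) ∂μc := by
  have hfs' := hfs.1.aemeasurable
  have hgs' := hgs.1.aemeasurable
  simp_rw [neg_mul_eq_mul_neg]
  rw [lintegral_ofReal_mul_eq_add (v := fun x => -g x) hf hg.neg,
    lintegral_ofReal_mul_eq_add (v := fun x => -gs x) hfs' hgs'.neg]
  simp only [neg_neg]
  gcongr ?_ + ?_
  · exact lintegral_ofReal_mul_ofReal_mono hfs' hgs'.neg hf hg.neg
      (measure_inter_neg_le_of_isRearrangement hf hg hfs hgs)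
  · refine lintegral_ofReal_mul_ofReal_mono hfs'.neg hgs' hf.neg hg fun s t => ?_
    rw [inter_comm, inter_comm ((fun x => -f x) ⁻¹' _)]
    exact measure_inter_neg_le_of_isRearrangement hg hf hgs hfs t s

end Rearrangement

theorem statement3_general (p q : ℝ≥0∞) (hpq : 1/p + 1/q = 1)
    (f g fs gs : ℝ → ℝ) (hfm : Measurable f) (hgm : Measurable g)
    (hf : eLpNorm f p μc < ⊤) (hg : eLpNorm g q μc < ⊤)
    (hfs : IsRearrangement f fs) (hgs : IsRearrangement g gs) :
    ∫ x in circ, f x * g x ≤ ∫ x in circ, fs x * gs x := by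
  have : ENNReal.HolderConjugate p q := ⟨by simpa only [one_div, inv_one] using hpq⟩
  have hfL : MemLp f p μc := ⟨hfm.aestronglyMeasurable, hf⟩
  have hgL : MemLp g q μc := ⟨hgm.aestronglyMeasurable, hg⟩
  have hfsL : MemLp fs p μc := ((hfs.identDistrib hfm.aemeasurable).memLp_iff).2 hfL
  have hgsL : MemLp gs q μc := ((hgs.identDistrib hgm.aemeasurable).memLp_iff).2 hgL
  have hfg : Integrable (fun x => f x * g x) μc := hfL.integrable_mul hgL
  have hfgs : Integrable (fun x => fs x * gs x) μc := hfsL.integrable_mul hgsL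
  change ∫ x, f x * g x ∂μc ≤ ∫ x, fs x * gs x ∂μc
  rw [integral_eq_lintegral_pos_part_sub_lintegral_neg_part hfg,
    integral_eq_lintegral_pos_part_sub_lintegral_neg_part hfgs]
  exact sub_le_sub
    (ENNReal.toReal_mono hfgs.lintegral_lt_top.ne <|
      lintegral_ofReal_mul_le_of_isRearrangement hfm.aemeasurable hgm.aemeasurable hfs hgs)
    (ENNReal.toReal_mono hfg.neg.lintegral_lt_top.ne <|
      lintegral_ofReal_neg_mul_le_of_isRearrangement hfm.aemeasurable hgm.aemeasurable hfs hgs)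

/-- **Hardy–Littlewood inequality on the circle**:
`∫_S f g ≤ ∫_S f* g*` for conjugate exponents `p, q`. -/
theorem statement3 (p q : ℝ≥0∞) (hp : 1 ≤ p) (hq : 1 ≤ q) (hpq : 1/p + 1/q = 1)
    (f g fs gs : ℝ → ℝ) (hfm : Measurable f) (hgm : Measurable g)
    (hf : eLpNorm f p μc < ⊤) (hg : eLpNorm g q μc < ⊤)
    (hfs : IsRearrangement f fs) (hgs : IsRearrangement g gs) :
    ∫ x in circ, f x * g x ≤ ∫ x in circ, fs x * gs x :=
  statement3_general p q hpq f g fs gs hfm hgm hf hg hfs hgs
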